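/- arXiv:math/0406094 — 2 statements merged into one kernel-verified Lean document; each statement's English description precedes it below -/
import Mathlib

section
/- In the circular parking model with n places and n−1 cars, for every k with 1 ≤ k ≤ n−1 the conditional second moment of R_{k,n} given L_{k,n} is at most (n − L_{k,n})²/(n − k); equivalently, for every integer l, E[ R_{k,n}² · 1_{L_{k,n} = l} ] ≤ ((n − l)²/(n − k)) · P(L_{k,n} = l). -/
open scoped BigOperators
open Classical Filter Topology

noncomputable section

namespace Parking

/-- The first empty place reached going clockwise from `t` (including `t` itself),
given the set `S` of occupied places. -/
def firstFree {n : ℕ} (S : Finset (ZMod n)) (t : ZMod n) : ZMod n :=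
  if h : ∃ i : ℕ, t + (i : ZMod n) ∉ S then t + ((Nat.find h : ℕ) : ZMod n) else t

/-- `occ t j` : the set of places occupied after the first `j` cars (with first tries
`t 0, …, t (j-1)`) have parked. -/
def occ {n : ℕ} (t : ℕ → ZMod n) : ℕ → Finset (ZMod n)
  | 0 => ∅
  | j + 1 => insert (firstFree (occ t j) (t j)) (occ t j)

/-- The place filled by car `j+1` (0-indexed `j`). -/
def spot {n : ℕ} (t : ℕ → ZMod n) (j : ℕ) : ZMod n :=
  firstFree (occ t j) (t j)

/-- The size of the block whose empty place is `e`, in the configuration with occupied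
set `S`: the empty place `e` together with the maximal run of occupied places
immediately preceding it clockwise. -/
def blockSize {n : ℕ} (S : Finset (ZMod n)) (e : ZMod n) : ℕ :=
  if h : ∃ i : ℕ, e - ((i + 1 : ℕ) : ZMod n) ∉ S then Nat.find h + 1 else 0

/-- The next empty place strictly after `e` clockwise, for occupied set `S`. -/
def nextEmpty {n : ℕ} (S : Finset (ZMod n)) (e : ZMod n) : ZMod n :=
  if h : ∃ i : ℕ, e + ((i + 1 : ℕ) : ZMod n) ∉ S then e + ((Nat.find h + 1 : ℕ) : ZMod n) else e

/-- `L_{j,n}` (1-indexed `j`): the size, just before car `j` parks, of the block whose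
empty place is the place `v_j` filled by car `j`. -/
def Lsize {n : ℕ} (t : ℕ → ZMod n) (j : ℕ) : ℕ :=
  blockSize (occ t (j - 1)) (spot t (j - 1))

/-- `R_{j,n}` (1-indexed `j`): the size, just before car `j` parks, of the block
immediately following (clockwise) the block whose empty place is `v_j`. -/
def Rsize {n : ℕ} (t : ℕ → ZMod n) (j : ℕ) : ℕ :=
  blockSize (occ t (j - 1)) (nextEmpty (occ t (j - 1)) (spot t (j - 1)))

/-- `D_{j,n}` (1-indexed `j`): the displacement of car `j`, i.e. `((v_j - t_j) mod n) + 1`. -/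
def Dsize {n : ℕ} (t : ℕ → ZMod n) (j : ℕ) : ℕ :=
  (spot t (j - 1) - t (j - 1)).val + 1

/-- Extend a finite try-sequence `t : Fin k → Fin n` into a function `ℕ → ZMod n`. -/
def extend (n k : ℕ) (t : Fin k → Fin n) : ℕ → ZMod n :=
  fun j => if h : j < k then ((t ⟨j, h⟩ : ℕ) : ZMod n) else 0

/-- Expectation, under the uniform measure on try-sequences `{0,…,n-1}^k`,
of a real functional of the parking process with `n` places and `k` cars. -/
def expect (n k : ℕ) (X : (ℕ → ZMod n) → ℝ) : ℝ :=
  (∑ t : Fin k → Fin n, X (extend n k t)) / (n : ℝ) ^ k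

/-- Probability, under the uniform measure on try-sequences `{0,…,n-1}^k`, of an event. -/
def prob (n k : ℕ) (P : (ℕ → ZMod n) → Prop) : ℝ :=
  expect n k (fun t => if P t then 1 else 0)

/-- The solution of the additive Smoluchowski equation with monodisperse initial data. -/
def q (k : ℕ) (t : ℝ) : ℝ :=
  ((k : ℝ) * (1 - Real.exp (-t))) ^ (k - 1) * Real.exp (-t) *
    Real.exp (-((k : ℝ) * (1 - Real.exp (-t)))) / (Nat.factorial k)

/-- `emptyPlace S e i`: the `i`-th empty place clockwise starting from `e` (which is
assumed empty), for occupied set `S`. -/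
def emptyPlace {n : ℕ} (S : Finset (ZMod n)) (e : ZMod n) : ℕ → ZMod n
  | 0 => e
  | i + 1 => nextEmpty S (emptyPlace S e i)

end Parking

/-!
Fix the configuration met by car `k`: `k - 1` occupied places and `m = n - k + 1` empty ones,
`v = e₀, e₁, …, e_{m-1}` clockwise, where `v` is the place car `k` takes. `L` is the size of the
block of `v`, the other blocks have sizes `g₀, …, g_{m-2}` summing to `n - L`, and `R = g₀`.
For `j < m - 1`, exchanging the run of blocks of `e₁, …, e_j` with that of `e_{j+1}, …, e_{m-1}`
and moving the first `k` tries along is a bijection of the sample space: the exchange translates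
each block rigidly, so every car still parks at the image of its old place. It fixes `L` and
turns `R` into `g_j`. Summing over `j`,
`(n - k) E[R²; L = l] = E[∑ g_j²; L = l] ≤ (n - l)² P(L = l)`.
-/

lemma Nat.find_add_one_eq_of {P : ℕ → Prop} [DecidablePred P] (h : ∃ i, P (i + 1)) {d : ℕ}
    (hd : 1 ≤ d) (hP : P d) (hmin : ∀ w, 1 ≤ w → w < d → ¬ P w) : Nat.find h + 1 = d := by
  obtain ⟨d, rfl⟩ : ∃ d', d = d' + 1 := ⟨d - 1, by omega⟩
  rw [Nat.add_right_cancel_iff, Nat.find_eq_iff]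
  exact ⟨hP, fun w hw => hmin (w + 1) (by omega) (by omega)⟩

lemma Nat.exists_le_lt_succ {f : ℕ → ℕ} {d R : ℕ} (h0 : f 0 ≤ d) (hR : d < f R) :
    ∃ r < R, f r ≤ d ∧ d < f (r + 1) := by
  induction R with
  | zero => omega
  | succ R ih =>
    by_cases h : f R ≤ d
    · exact ⟨R, by omega, h, hR⟩
    · obtain ⟨r, hr, h1, h2⟩ := ih (by omega)
      exact ⟨r, by omega, h1, h2⟩

lemma ZMod.natCast_sub_self_eq_neg {n w : ℕ} (hw : w ≤ n) :
    ((n - w : ℕ) : ZMod n) = -(w : ZMod n) := by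
  rw [Nat.cast_sub hw, ZMod.natCast_self, zero_sub]

lemma Finset.sum_range_sq_tsub_le {f : ℕ → ℕ} (hf : Monotone f) (N : ℕ) :
    ∑ j ∈ Finset.range N, (f (j + 1) - f j) ^ 2 ≤ (f N - f 0) ^ 2 := by
  rw [← Finset.sum_range_tsub hf]
  exact Finset.sum_sq_le_sq_sum_of_nonneg fun _ _ => Nat.zero_le _

namespace Parking

section Search

variable {n : ℕ} {S T : Finset (ZMod n)} {e p : ZMod n}

lemma firstFree_eq_of {d : ℕ} (hmem : ∀ w < d, p + w ∈ S) (hout : p + d ∉ S) :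
    firstFree S p = p + d := by
  have h : ∃ i : ℕ, p + (i : ZMod n) ∉ S := ⟨d, hout⟩
  rw [firstFree, dif_pos h, (Nat.find_eq_iff h).2 ⟨hout, fun w hw => not_not.2 (hmem w hw)⟩]

lemma firstFree_image_of_add {τ : ZMod n → ZMod n} (hτ : Function.Injective τ)
    {O : Finset (ZMod n)} {d : ℕ} (hmem : ∀ w < d, p + w ∈ O) (hout : p + d ∉ O)
    (htrans : ∀ w ≤ d, τ (p + w) = τ p + w) :
    firstFree (O.image τ) (τ p) = τ (firstFree O p) := by
  rw [firstFree_eq_of hmem hout, htrans d le_rfl]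
  refine firstFree_eq_of (fun w hw => ?_) ?_
  · rw [← htrans w hw.le]
    exact Finset.mem_image_of_mem τ (hmem w hw)
  · rwa [← htrans d le_rfl, hτ.mem_finset_image]

lemma blockSize_eq_of {d : ℕ} (hd : 1 ≤ d) (hmem : ∀ w, 1 ≤ w → w < d → e - w ∈ S)
    (hout : e - d ∉ S) : blockSize S e = d := by
  have h : ∃ i : ℕ, e - ((i + 1 : ℕ) : ZMod n) ∉ S := ⟨d - 1, by rwa [Nat.sub_add_cancel hd]⟩
  rw [blockSize, dif_pos h]
  exact Nat.find_add_one_eq_of (P := fun i : ℕ => e - (i : ZMod n) ∉ S) h hd hout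
    fun w hw1 hw hw' => hw' (hmem w hw1 hw)

def gap (S : Finset (ZMod n)) (e : ZMod n) : ℕ :=
  if h : ∃ i : ℕ, e + ((i + 1 : ℕ) : ZMod n) ∉ S then Nat.find h + 1 else 0

lemma nextEmpty_eq_add_gap (S : Finset (ZMod n)) (e : ZMod n) :
    nextEmpty S e = e + (gap S e : ZMod n) := by
  unfold nextEmpty gap
  split_ifs <;> simp

lemma gap_eq_of {d : ℕ} (hd : 1 ≤ d) (hmem : ∀ w, 1 ≤ w → w < d → e + w ∈ S)
    (hout : e + d ∉ S) : gap S e = d := by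
  have h : ∃ i : ℕ, e + ((i + 1 : ℕ) : ZMod n) ∉ S := ⟨d - 1, by rwa [Nat.sub_add_cancel hd]⟩
  rw [gap, dif_pos h]
  exact Nat.find_add_one_eq_of (P := fun i : ℕ => e + (i : ZMod n) ∉ S) h hd hout
    fun w hw1 hw hw' => hw' (hmem w hw1 hw)

variable [NeZero n]

lemma exists_notMem_of_card_lt (h : S.card < n) : ∃ q, q ∉ S := by
  obtain ⟨q, -, hq⟩ := Finset.exists_mem_notMem_of_card_lt_card (s := S) (t := Finset.univ)
    (by rwa [Finset.card_univ, ZMod.card])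
  exact ⟨q, hq⟩

lemma exists_add_notMem {q : ZMod n} (hq : q ∉ S) (p : ZMod n) :
    ∃ i : ℕ, p + (i : ZMod n) ∉ S :=
  ⟨(q - p).val, by simpa [ZMod.natCast_zmod_val] using hq⟩

lemma firstFree_notMem {q : ZMod n} (hq : q ∉ S) (p : ZMod n) : firstFree S p ∉ S := by
  rw [firstFree, dif_pos (exists_add_notMem hq p)]
  exact Nat.find_spec (exists_add_notMem hq p)

lemma exists_add_succ_notMem (he : e ∉ S) : ∃ i : ℕ, e + ((i + 1 : ℕ) : ZMod n) ∉ S :=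
  ⟨n - 1, by rwa [Nat.sub_add_cancel NeZero.one_le, ZMod.natCast_self, add_zero]⟩

lemma gap_eq_find (he : e ∉ S) : gap S e = Nat.find (exists_add_succ_notMem he) + 1 :=
  dif_pos _

lemma add_gap_notMem (he : e ∉ S) : e + (gap S e : ZMod n) ∉ S := by
  rw [gap_eq_find he]
  exact Nat.find_spec (exists_add_succ_notMem he)

lemma one_le_gap (he : e ∉ S) : 1 ≤ gap S e := by
  rw [gap_eq_find he]
  omega

lemma add_mem_of_lt_gap (he : e ∉ S) {w : ℕ} (hw1 : 1 ≤ w) (hw : w < gap S e) :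
    e + (w : ZMod n) ∈ S := by
  rw [gap_eq_find he] at hw
  obtain ⟨w, rfl⟩ : ∃ w', w = w' + 1 := ⟨w - 1, by omega⟩
  exact not_not.1 (Nat.find_min (exists_add_succ_notMem he) (by omega))

lemma gap_le_of (he : e ∉ S) {w : ℕ} (hw1 : 1 ≤ w) (hout : e + (w : ZMod n) ∉ S) :
    gap S e ≤ w :=
  not_lt.1 fun hw => hout (add_mem_of_lt_gap he hw1 hw)

lemma gap_eq_gap_of_add_mem_iff {e' : ZMod n} (he : e ∉ S)
    (hiff : ∀ w : ℕ, 1 ≤ w → w ≤ gap S e → (e' + (w : ZMod n) ∈ T ↔ e + (w : ZMod n) ∈ S)) :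
    gap T e' = gap S e :=
  gap_eq_of (one_le_gap he)
    (fun w hw1 hw => (hiff w hw1 hw.le).2 (add_mem_of_lt_gap he hw1 hw))
    (fun h => add_gap_notMem he ((hiff _ (one_le_gap he) le_rfl).1 h))

end Search

section Occupied

variable {n : ℕ}

lemma occ_succ (t : ℕ → ZMod n) (j : ℕ) : occ t (j + 1) = insert (spot t j) (occ t j) := rfl

lemma occ_mono (t : ℕ → ZMod n) : Monotone (occ t) :=
  monotone_nat_of_le_succ fun _ => Finset.subset_insert _ _

lemma occ_congr {t t' : ℕ → ZMod n} {j : ℕ} (h : ∀ i < j, t i = t' i) : occ t j = occ t' j := by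
  induction j with
  | zero => rfl
  | succ j ih =>
    have hocc := ih fun i hi => h i (by omega)
    rw [occ_succ, occ_succ, spot, spot, hocc, h j (by omega)]

lemma spot_congr {t t' : ℕ → ZMod n} {j : ℕ} (h : ∀ i ≤ j, t i = t' i) : spot t j = spot t' j := by
  rw [spot, spot, occ_congr fun i hi => h i hi.le, h j le_rfl]

lemma occ_comp_eq_image {τ : ZMod n → ZMod n} {t : ℕ → ZMod n} {j : ℕ}
    (hτ : ∀ i < j, firstFree ((occ t i).image τ) (τ (t i)) = τ (spot t i)) :
    occ (τ ∘ t) j = (occ t j).image τ := by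
  induction j with
  | zero => rfl
  | succ j ih =>
    rw [occ_succ, occ_succ, Finset.image_insert, ← ih fun i hi => hτ i (by omega), spot,
      Function.comp_apply, ih fun i hi => hτ i (by omega), hτ j (by omega)]

variable [NeZero n]

lemma card_occ (t : ℕ → ZMod n) {j : ℕ} (hj : j ≤ n) : (occ t j).card = j := by
  induction j with
  | zero => rfl
  | succ j ih =>
    obtain ⟨q, hq⟩ := exists_notMem_of_card_lt (S := occ t j) (by rw [ih (by omega)]; omega)
    have hspot : spot t j ∉ occ t j := firstFree_notMem hq (t j)
    rw [occ_succ, Finset.card_insert_of_notMem hspot, ih (by omega)]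

lemma spot_notMem_occ (t : ℕ → ZMod n) {j : ℕ} (hj : j < n) : spot t j ∉ occ t j := by
  obtain ⟨q, hq⟩ := exists_notMem_of_card_lt (S := occ t j) (by rwa [card_occ t hj.le])
  exact firstFree_notMem hq _

end Occupied

def emptyDist {n : ℕ} (S : Finset (ZMod n)) (v : ZMod n) : ℕ → ℕ
  | 0 => 0
  | r + 1 => emptyDist S v r + gap S (v + emptyDist S v r)

section EmptyDist

variable {n : ℕ} {S : Finset (ZMod n)} {v : ZMod n}

lemma emptyDist_zero : emptyDist S v 0 = 0 := rfl

lemma emptyDist_succ (r : ℕ) :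
    emptyDist S v (r + 1) = emptyDist S v r + gap S (v + emptyDist S v r) := rfl

lemma gap_add_emptyDist (r : ℕ) :
    gap S (v + emptyDist S v r) = emptyDist S v (r + 1) - emptyDist S v r := by
  rw [emptyDist_succ]
  omega

variable [NeZero n]

lemma card_lt_of_notMem (hv : v ∉ S) : S.card < n := by
  simpa using Finset.card_lt_univ_of_notMem hv

lemma add_emptyDist_notMem (hv : v ∉ S) (r : ℕ) : v + (emptyDist S v r : ZMod n) ∉ S := by
  induction r with
  | zero => simpa [emptyDist] using hv
  | succ r ih =>
    rw [emptyDist_succ, Nat.cast_add, ← add_assoc]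
    exact add_gap_notMem ih

lemma emptyDist_strictMono (hv : v ∉ S) : StrictMono (emptyDist S v) :=
  strictMono_nat_of_lt_succ fun r => by
    have := one_le_gap (add_emptyDist_notMem hv r)
    rw [emptyDist_succ]
    omega

lemma add_mem_of_emptyDist_lt_lt (hv : v ∉ S) {r d : ℕ} (h1 : emptyDist S v r < d)
    (h2 : d < emptyDist S v (r + 1)) : v + (d : ZMod n) ∈ S := by
  rw [emptyDist_succ] at h2
  have := add_mem_of_lt_gap (add_emptyDist_notMem hv r) (w := d - emptyDist S v r) (by omega)
    (by omega)
  rwa [add_assoc, ← Nat.cast_add, Nat.add_sub_cancel' h1.le] at this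

lemma exists_emptyDist_eq_of_notMem (hv : v ∉ S) {d R : ℕ} (hd : d < emptyDist S v R)
    (hout : v + (d : ZMod n) ∉ S) : ∃ r < R, emptyDist S v r = d := by
  obtain ⟨r, hr, h1, h2⟩ := Nat.exists_le_lt_succ (f := emptyDist S v) (Nat.zero_le d) hd
  exact ⟨r, hr, h1.antisymm (not_lt.1 fun h => hout (add_mem_of_emptyDist_lt_lt hv h h2))⟩

lemma exists_emptyDist_lt_lt_of_mem (hv : v ∉ S) {d R : ℕ} (hd : d < emptyDist S v R)
    (hmem : v + (d : ZMod n) ∈ S) :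
    ∃ r < R, emptyDist S v r < d ∧ d < emptyDist S v (r + 1) := by
  obtain ⟨r, hr, h1, h2⟩ := Nat.exists_le_lt_succ (f := emptyDist S v) (Nat.zero_le d) hd
  refine ⟨r, hr, h1.lt_of_ne ?_, h2⟩
  rintro rfl
  exact add_emptyDist_notMem hv r hmem

lemma emptyDist_card_compl (hv : v ∉ S) : emptyDist S v (n - S.card) = n := by
  have hmono := emptyDist_strictMono hv
  have hex : ∃ r, n ≤ emptyDist S v r := ⟨n, hmono.le_apply⟩
  have hlt : ∀ r < Nat.find hex, emptyDist S v r < n := fun r hr => not_le.1 (Nat.find_min hex hr)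
  -- the distances increase until they reach `v` again, at distance exactly `n`
  have hfind : emptyDist S v (Nat.find hex) = n := by
    obtain ⟨r, hr⟩ : ∃ r, Nat.find hex = r + 1 := Nat.exists_eq_add_one.2 <|
      Nat.pos_of_ne_zero fun h => NeZero.ne n (by simpa [h, emptyDist] using Nat.find_spec hex)
    have hrn := hlt r (by omega)
    have hgap := gap_le_of (add_emptyDist_notMem hv r) (w := n - emptyDist S v r) (by omega)
      (by rwa [add_assoc, ← Nat.cast_add, Nat.add_sub_cancel' hrn.le, ZMod.natCast_self, add_zero])
    have := Nat.find_spec hex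
    rw [hr, emptyDist_succ] at this ⊢
    omega
  -- and the empty places met on the way are all the empty places
  have hcard : Nat.find hex = Sᶜ.card := by
    rw [← Finset.card_range (Nat.find hex)]
    refine Finset.card_bij (fun r _ => v + (emptyDist S v r : ZMod n))
      (fun r _ => Finset.mem_compl.2 (add_emptyDist_notMem hv r)) ?_ ?_
    · intro r hr r' hr' h
      have := congrArg ZMod.val (add_left_cancel h)
      rw [ZMod.val_cast_of_lt (hlt r (Finset.mem_range.1 hr)),
        ZMod.val_cast_of_lt (hlt r' (Finset.mem_range.1 hr'))] at this
      exact hmono.injective this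
    · intro q hq
      obtain ⟨r, hr, hrq⟩ := exists_emptyDist_eq_of_notMem hv (d := (q - v).val)
        (by rw [hfind]; exact ZMod.val_lt _)
        (by simpa [ZMod.natCast_zmod_val] using Finset.mem_compl.1 hq)
      exact ⟨r, Finset.mem_range.2 hr, by rw [hrq, ZMod.natCast_zmod_val, add_sub_cancel]⟩
  rw [Finset.card_compl, ZMod.card] at hcard
  rwa [← hcard]

lemma emptyDist_lt (hv : v ∉ S) {r : ℕ} (hr : r < n - S.card) : emptyDist S v r < n := by
  simpa only [emptyDist_card_compl hv] using emptyDist_strictMono hv hr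

lemma blockSize_eq_sub_emptyDist (hv : v ∉ S) :
    blockSize S v = n - emptyDist S v (n - S.card - 1) := by
  have hS := card_lt_of_notMem hv
  have hlast := emptyDist_lt hv (r := n - S.card - 1) (by omega)
  have hend : emptyDist S v (n - S.card - 1 + 1) = n := by
    rw [Nat.sub_add_cancel (by omega)]
    exact emptyDist_card_compl hv
  apply blockSize_eq_of (by omega)
  · intro w hw1 hw
    rw [sub_eq_add_neg, ← ZMod.natCast_sub_self_eq_neg (by omega)]
    exact add_mem_of_emptyDist_lt_lt hv (r := n - S.card - 1) (by omega) (by omega)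
  · rw [sub_eq_add_neg, ← ZMod.natCast_sub_self_eq_neg (by omega), Nat.sub_sub_self hlast.le]
    exact add_emptyDist_notMem hv _

lemma blockSize_nextEmpty (hv : v ∉ S) : blockSize S (nextEmpty S v) = emptyDist S v 1 := by
  have h01 := emptyDist_strictMono hv zero_lt_one
  have hnext : nextEmpty S v = v + (emptyDist S v 1 : ZMod n) := by
    simp [nextEmpty_eq_add_gap, emptyDist]
  rw [hnext]
  apply blockSize_eq_of h01
  · intro w hw1 hw
    rw [add_sub_assoc, ← Nat.cast_sub hw.le]
    exact add_mem_of_emptyDist_lt_lt hv (r := 0) (by rw [emptyDist_zero]; omega)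
      (by rw [zero_add]; omega)
  · simpa using hv

end EmptyDist

def swapSegments (a b d : ℕ) : ℕ :=
  if 1 ≤ d ∧ d ≤ a then d + b else if a < d ∧ d ≤ a + b then d - a else d

lemma swapSegments_swapSegments (a b d : ℕ) : swapSegments b a (swapSegments a b d) = d := by
  unfold swapSegments
  split_ifs <;> omega

lemma swapSegments_lt {a b d n : ℕ} (hab : a + b < n) (hd : d < n) : swapSegments a b d < n := by
  unfold swapSegments
  split_ifs <;> omega

def swapSegmentsAt {n : ℕ} (v : ZMod n) (a b : ℕ) (p : ZMod n) : ZMod n :=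
  v + swapSegments a b (p - v).val

section SwapSegmentsAt

variable {n : ℕ} {v : ZMod n} {a b : ℕ}

lemma swapSegmentsAt_self : swapSegmentsAt v a b v = v := by
  simp [swapSegmentsAt, swapSegments]

lemma swapSegmentsAt_add (hab : a + b < n) {d : ℕ} (hd : d ≤ n) :
    swapSegmentsAt v a b (v + d) = v + swapSegments a b d := by
  rcases hd.lt_or_eq with hd | hd
  · rw [swapSegmentsAt, add_sub_cancel_left, ZMod.val_cast_of_lt hd]
  · have hn : swapSegments a b n = n := by
      unfold swapSegments
      split_ifs <;> omega
    rw [hd, hn, ZMod.natCast_self, add_zero, swapSegmentsAt_self]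

variable [NeZero n]

lemma swapSegmentsAt_swapSegmentsAt (hab : a + b < n) (p : ZMod n) :
    swapSegmentsAt v b a (swapSegmentsAt v a b p) = p := by
  rw [show swapSegmentsAt v a b p = v + swapSegments a b (p - v).val from rfl,
    swapSegmentsAt_add (by omega) (swapSegments_lt hab (ZMod.val_lt _)).le,
    swapSegments_swapSegments, ZMod.natCast_zmod_val, add_sub_cancel]

lemma swapSegmentsAt_injective (hab : a + b < n) : Function.Injective (swapSegmentsAt v a b) :=
  Function.LeftInverse.injective (swapSegmentsAt_swapSegmentsAt hab)

lemma mem_image_swapSegmentsAt (hab : a + b < n) {S : Finset (ZMod n)} {p : ZMod n} :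
    p ∈ S.image (swapSegmentsAt v a b) ↔ swapSegmentsAt v b a p ∈ S := by
  constructor
  · intro h
    obtain ⟨q, hq, rfl⟩ := Finset.mem_image.1 h
    rwa [swapSegmentsAt_swapSegmentsAt hab]
  · intro h
    exact Finset.mem_image.2 ⟨_, h, swapSegmentsAt_swapSegmentsAt (by omega) p⟩

end SwapSegmentsAt

/-- With `v` empty and `e₁, …, e_{m-1}` the other empty places in clockwise order, the run of
blocks of `e₁, …, e_j` is exchanged with that of `e_{j+1}, …, e_{m-1}`; the block of `v` stays. -/
def blockSwap {n : ℕ} (S : Finset (ZMod n)) (v : ZMod n) (j : ℕ) : ZMod n → ZMod n :=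
  swapSegmentsAt v (emptyDist S v j) (emptyDist S v (n - S.card - 1) - emptyDist S v j)

section BlockSwap

variable {n : ℕ} [NeZero n] {S : Finset (ZMod n)} {v : ZMod n} {j : ℕ}

lemma emptyDist_add_sub_lt (hv : v ∉ S) (hj : j < n - S.card) :
    emptyDist S v j + (emptyDist S v (n - S.card - 1) - emptyDist S v j) < n := by
  have := (emptyDist_strictMono hv).monotone (show j ≤ n - S.card - 1 by omega)
  have := emptyDist_lt hv (r := n - S.card - 1) (by omega)
  omega

lemma blockSwap_injective (hv : v ∉ S) (hj : j < n - S.card) :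
    Function.Injective (blockSwap S v j) :=
  swapSegmentsAt_injective (emptyDist_add_sub_lt hv hj)

lemma exists_blockSwap_add_eq (hv : v ∉ S) (hj : j < n - S.card) {r : ℕ} (hr : r < n - S.card) :
    ∃ c : ZMod n, ∀ d : ℕ, emptyDist S v r < d → d ≤ emptyDist S v (r + 1) →
      blockSwap S v j (v + d) = v + d + c := by
  have hmono := (emptyDist_strictMono hv).monotone
  have hend := emptyDist_card_compl hv
  have hr1 := hmono (show r + 1 ≤ n - S.card by omega)
  have hjm := hmono (show j ≤ n - S.card - 1 by omega)
  have hswap : ∀ d ≤ n, blockSwap S v j (v + d) = v + swapSegments (emptyDist S v j)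
      (emptyDist S v (n - S.card - 1) - emptyDist S v j) d :=
    fun d hd => swapSegmentsAt_add (emptyDist_add_sub_lt hv hj) hd
  by_cases hrj : r < j
  · have := hmono (show r + 1 ≤ j by omega)
    refine ⟨((emptyDist S v (n - S.card - 1) - emptyDist S v j : ℕ) : ZMod n), fun d h1 h2 => ?_⟩
    rw [hswap d (by omega), swapSegments, if_pos (by omega), Nat.cast_add, add_assoc]
  by_cases hrm : r + 1 < n - S.card
  · have := hmono (show j ≤ r by omega)
    have := hmono (show r + 1 ≤ n - S.card - 1 by omega)
    refine ⟨-(emptyDist S v j : ZMod n), fun d h1 h2 => ?_⟩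
    rw [hswap d (by omega), swapSegments, if_neg (by omega), if_pos (by omega),
      Nat.cast_sub (by omega), sub_eq_add_neg, add_assoc]
  · obtain rfl : r = n - S.card - 1 := by omega
    refine ⟨0, fun d h1 h2 => ?_⟩
    rw [hswap d (by omega), swapSegments, if_neg (by omega), if_neg (by omega), add_zero]

lemma firstFree_image_blockSwap (hv : v ∉ S) (hj : j < n - S.card) {O : Finset (ZMod n)}
    (hO : O ⊆ S) (p : ZMod n) :
    firstFree (O.image (blockSwap S v j)) (blockSwap S v j p) =
      blockSwap S v j (firstFree O p) := by
  have hinj := blockSwap_injective hv hj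
  by_cases hp : p ∈ S
  · obtain ⟨dp, hdp, rfl⟩ : ∃ dp < n, p = v + (dp : ZMod n) :=
      ⟨(p - v).val, ZMod.val_lt _, by rw [ZMod.natCast_zmod_val, add_sub_cancel]⟩
    obtain ⟨r, hr, h1, h2⟩ := exists_emptyDist_lt_lt_of_mem hv (R := n - S.card)
      (by rwa [emptyDist_card_compl hv]) hp
    obtain ⟨c, hc⟩ := exists_blockSwap_add_eq hv hj hr
    -- the search stops at the latest at the empty place that ends the block
    have hout : v + dp + ((emptyDist S v (r + 1) - dp : ℕ) : ZMod n) ∉ O := fun h => by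
      rw [add_assoc, ← Nat.cast_add, Nat.add_sub_cancel' h2.le] at h
      exact add_emptyDist_notMem hv (r + 1) (hO h)
    have hex : ∃ i : ℕ, v + dp + (i : ZMod n) ∉ O := ⟨_, hout⟩
    have hle := Nat.find_min' hex hout
    refine firstFree_image_of_add hinj (fun w hw => not_not.1 (Nat.find_min hex hw))
      (Nat.find_spec hex) fun w hw => ?_
    rw [add_assoc, ← Nat.cast_add, hc _ (by omega) (by omega), hc _ h1 h2.le]
    push_cast
    ring
  · exact firstFree_image_of_add hinj (d := 0) (by simp) (by simpa using fun h => hp (hO h))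
      fun w hw => by simp [Nat.le_zero.1 hw]

end BlockSwap

section ImageBlockSwap

variable {n : ℕ} [NeZero n] {S : Finset (ZMod n)} {v : ZMod n} {j : ℕ}

lemma emptyDist_image_swapSegmentsAt_succ {a b : ℕ} (hab : a + b < n) (hv : v ∉ S) {r i x : ℕ}
    (hx : emptyDist (S.image (swapSegmentsAt v a b)) v r = x)
    (hxn : x + (emptyDist S v (i + 1) - emptyDist S v i) ≤ n)
    (hswap : ∀ w, 1 ≤ w → w ≤ emptyDist S v (i + 1) - emptyDist S v i →
      swapSegments b a (x + w) = emptyDist S v i + w) :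
    emptyDist (S.image (swapSegmentsAt v a b)) v (r + 1) =
      x + (emptyDist S v (i + 1) - emptyDist S v i) := by
  rw [emptyDist_succ, hx, ← gap_add_emptyDist i]
  congr 1
  refine gap_eq_gap_of_add_mem_iff (add_emptyDist_notMem hv i) fun w hw1 hw => ?_
  rw [gap_add_emptyDist] at hw
  rw [mem_image_swapSegmentsAt hab, add_assoc, ← Nat.cast_add,
    swapSegmentsAt_add (by omega) (by omega), hswap w hw1 hw, Nat.cast_add, add_assoc]

lemma emptyDist_image_blockSwap_of_le (hv : v ∉ S) {r : ℕ} (hr : j + r ≤ n - S.card - 1) :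
    emptyDist (S.image (blockSwap S v j)) v r = emptyDist S v (j + r) - emptyDist S v j := by
  have hmono := (emptyDist_strictMono hv).monotone
  have hlast := emptyDist_lt hv (r := n - S.card - 1) (by have := card_lt_of_notMem hv; omega)
  induction r with
  | zero => simp [emptyDist_zero]
  | succ r ih =>
    have := hmono (show j ≤ j + r by omega)
    have := hmono (show j + r ≤ j + r + 1 by omega)
    have := hmono (show j + r + 1 ≤ n - S.card - 1 by omega)
    rw [← add_assoc]
    refine (emptyDist_image_swapSegmentsAt_succ (emptyDist_add_sub_lt hv (j := j) (by omega)) hv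
      (ih (by omega)) (i := j + r) (by omega) fun w hw1 hw => ?_).trans (by omega)
    rw [swapSegments, if_pos (by omega)]
    omega

lemma emptyDist_image_blockSwap_of_ge (hv : v ∉ S) (hj : j < n - S.card) {i : ℕ} (hi : i ≤ j) :
    emptyDist (S.image (blockSwap S v j)) v (n - S.card - 1 - j + i) =
      emptyDist S v i + (emptyDist S v (n - S.card - 1) - emptyDist S v j) := by
  have hmono := (emptyDist_strictMono hv).monotone
  have hlast := emptyDist_lt hv (r := n - S.card - 1) (by omega)
  have hjm := hmono (show j ≤ n - S.card - 1 by omega)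
  induction i with
  | zero =>
    rw [add_zero, emptyDist_image_blockSwap_of_le hv (by omega), Nat.add_sub_cancel' (by omega),
      emptyDist_zero, zero_add]
  | succ i ih =>
    have := hmono (show i ≤ i + 1 by omega)
    have := hmono (show i + 1 ≤ j by omega)
    rw [← add_assoc]
    refine (emptyDist_image_swapSegmentsAt_succ (emptyDist_add_sub_lt hv hj) hv
      (ih (by omega)) (i := i) (by omega) fun w hw1 hw => ?_).trans (by omega)
    rw [swapSegments, if_neg (by omega), if_pos (by omega)]
    omega

lemma notMem_image_blockSwap (hv : v ∉ S) (hj : j < n - S.card) :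
    v ∉ S.image (blockSwap S v j) := by
  have h := (blockSwap_injective hv hj).mem_finset_image (s := S) (a := v)
  rw [show blockSwap S v j v = v from swapSegmentsAt_self] at h
  exact fun hmem => hv (h.1 hmem)

lemma card_image_blockSwap (hv : v ∉ S) (hj : j < n - S.card) :
    (S.image (blockSwap S v j)).card = S.card :=
  Finset.card_image_of_injective _ (blockSwap_injective hv hj)

lemma emptyDist_image_blockSwap_last (hv : v ∉ S) (hj : j < n - S.card) :
    emptyDist (S.image (blockSwap S v j)) v (n - S.card - 1) = emptyDist S v (n - S.card - 1) := by
  have h := emptyDist_image_blockSwap_of_ge hv hj le_rfl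
  rwa [Nat.sub_add_cancel (by omega),
    Nat.add_sub_cancel' ((emptyDist_strictMono hv).monotone (by omega))] at h

lemma blockSize_image_blockSwap (hv : v ∉ S) (hj : j < n - S.card) :
    blockSize (S.image (blockSwap S v j)) v = blockSize S v := by
  rw [blockSize_eq_sub_emptyDist (notMem_image_blockSwap hv hj), blockSize_eq_sub_emptyDist hv,
    card_image_blockSwap hv hj, emptyDist_image_blockSwap_last hv hj]

lemma blockSize_nextEmpty_image_blockSwap (hv : v ∉ S) (hj : j + 1 < n - S.card) :
    blockSize (S.image (blockSwap S v j)) (nextEmpty (S.image (blockSwap S v j)) v) =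
      emptyDist S v (j + 1) - emptyDist S v j := by
  rw [blockSize_nextEmpty (notMem_image_blockSwap hv (by omega)),
    emptyDist_image_blockSwap_of_le hv (r := 1) (by omega)]

lemma blockSwap_image_blockSwap (hv : v ∉ S) (hj : j < n - S.card) (p : ZMod n) :
    blockSwap (S.image (blockSwap S v j)) v (n - S.card - 1 - j) (blockSwap S v j p) = p := by
  have hcut := emptyDist_image_blockSwap_of_le hv (j := j) (r := n - S.card - 1 - j)
    (by omega)
  rw [Nat.add_sub_cancel' (show j ≤ n - S.card - 1 by omega)] at hcut
  have hjm := (emptyDist_strictMono hv).monotone (show j ≤ n - S.card - 1 by omega)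
  rw [blockSwap.eq_1 (S.image (blockSwap S v j)), card_image_blockSwap hv hj,
    emptyDist_image_blockSwap_last hv hj, hcut, Nat.sub_sub_self hjm]
  exact swapSegmentsAt_swapSegmentsAt (emptyDist_add_sub_lt hv hj) p

end ImageBlockSwap

section SwapTries

variable {n : ℕ} [NeZero n] {K j : ℕ}

lemma occ_comp_blockSwap (t : ℕ → ZMod n) (hK : K < n) (hj : j < n - K) :
    occ (blockSwap (occ t K) (spot t K) j ∘ t) K =
      (occ t K).image (blockSwap (occ t K) (spot t K) j) :=
  occ_comp_eq_image fun i hi => firstFree_image_blockSwap (spot_notMem_occ t hK)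
    (by rwa [card_occ t hK.le]) (occ_mono t hi.le) (t i)

lemma spot_comp_blockSwap (t : ℕ → ZMod n) (hK : K < n) (hj : j < n - K) :
    spot (blockSwap (occ t K) (spot t K) j ∘ t) K = spot t K := by
  rw [spot, occ_comp_blockSwap t hK hj, Function.comp_apply,
    firstFree_image_blockSwap (spot_notMem_occ t hK) (by rwa [card_occ t hK.le]) subset_rfl]
  exact swapSegmentsAt_self

/-- Indices `i ≤ K` are the tries of cars `1, …, K + 1`, and `occ t K`, `spot t K` is the
configuration met by car `K + 1`. -/
def swapTries (K j : ℕ) (u : Fin (n - 1) → Fin n) : Fin (n - 1) → Fin n := fun i =>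
  if (i : ℕ) ≤ K then
    ⟨(blockSwap (occ (extend n (n - 1) u) K) (spot (extend n (n - 1) u) K) j (u i : ℕ)).val,
      ZMod.val_lt _⟩
  else u i

variable {u : Fin (n - 1) → Fin n}

lemma extend_swapTries (hK : K + 1 < n) {i : ℕ} (hi : i ≤ K) :
    extend n (n - 1) (swapTries K j u) i =
      (blockSwap (occ (extend n (n - 1) u) K) (spot (extend n (n - 1) u) K) j ∘
        extend n (n - 1) u) i := by
  have hin : i < n - 1 := by omega
  simp [extend, swapTries, hin, hi]

lemma occ_swapTries (hK : K + 1 < n) (hj : j < n - K) :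
    occ (extend n (n - 1) (swapTries K j u)) K =
      (occ (extend n (n - 1) u) K).image
        (blockSwap (occ (extend n (n - 1) u) K) (spot (extend n (n - 1) u) K) j) := by
  rw [occ_congr fun i hi => extend_swapTries hK hi.le, occ_comp_blockSwap _ (by omega) hj]

lemma spot_swapTries (hK : K + 1 < n) (hj : j < n - K) :
    spot (extend n (n - 1) (swapTries K j u)) K = spot (extend n (n - 1) u) K := by
  rw [spot_congr fun i hi => extend_swapTries hK hi, spot_comp_blockSwap _ (by omega) hj]

lemma Lsize_swapTries (hK : K + 1 < n) (hj : j < n - K) :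
    Lsize (extend n (n - 1) (swapTries K j u)) (K + 1) = Lsize (extend n (n - 1) u) (K + 1) := by
  have hv := spot_notMem_occ (extend n (n - 1) u) (j := K) (by omega)
  simp only [Lsize, Nat.add_sub_cancel]
  rw [occ_swapTries hK hj, spot_swapTries hK hj,
    blockSize_image_blockSwap hv (by rwa [card_occ _ (by omega)])]

lemma Rsize_swapTries (hK : K + 1 < n) (hj : j + 1 < n - K) :
    Rsize (extend n (n - 1) (swapTries K j u)) (K + 1) =
      emptyDist (occ (extend n (n - 1) u) K) (spot (extend n (n - 1) u) K) (j + 1) -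
        emptyDist (occ (extend n (n - 1) u) K) (spot (extend n (n - 1) u) K) j := by
  have hv := spot_notMem_occ (extend n (n - 1) u) (j := K) (by omega)
  simp only [Rsize, Nat.add_sub_cancel]
  rw [occ_swapTries hK (by omega), spot_swapTries hK (by omega),
    blockSize_nextEmpty_image_blockSwap hv (by rwa [card_occ _ (by omega)])]

lemma swapTries_swapTries (hK : K + 1 < n) (hj : j < n - K) :
    swapTries K (n - K - 1 - j) (swapTries K j u) = u := by
  have hv := spot_notMem_occ (extend n (n - 1) u) (j := K) (by omega)
  have hcard := card_occ (extend n (n - 1) u) (j := K) (by omega)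
  funext i
  by_cases hi : (i : ℕ) ≤ K
  · have hinv := blockSwap_image_blockSwap hv (by rwa [hcard]) (u i : ZMod n)
    rw [hcard] at hinv
    ext
    simp only [swapTries, if_pos hi]
    rw [occ_swapTries hK hj, spot_swapTries hK hj, ZMod.natCast_zmod_val, hinv,
      ZMod.val_cast_of_lt (u i).isLt]
  · simp [swapTries, hi]

lemma swapTries_bijective (hK : K + 1 < n) (hj : j < n - K) :
    Function.Bijective (swapTries (n := n) K j) := by
  refine Function.bijective_iff_has_inverse.2 ⟨swapTries K (n - K - 1 - j),
    fun u => swapTries_swapTries hK hj, fun u => ?_⟩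
  have h := swapTries_swapTries (u := u) (j := n - K - 1 - j) hK (by omega)
  rwa [show n - K - 1 - (n - K - 1 - j) = j by omega] at h

end SwapTries

section Counting

variable {n : ℕ} [NeZero n]

lemma sum_sq_emptyDist_sub_le (t : ℕ → ZMod n) {K : ℕ} (hK : K + 1 < n) :
    ∑ j ∈ Finset.range (n - K - 1),
        ((emptyDist (occ t K) (spot t K) (j + 1) - emptyDist (occ t K) (spot t K) j : ℕ) : ℝ) ^ 2 ≤
      ((n : ℝ) - Lsize t (K + 1)) ^ 2 := by
  have hv := spot_notMem_occ t (j := K) (by omega)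
  have hcard := card_occ t (j := K) (by omega)
  have hlast := emptyDist_lt hv (r := n - (occ t K).card - 1) (by omega)
  have hL : (n : ℝ) - Lsize t (K + 1) = emptyDist (occ t K) (spot t K) (n - K - 1) := by
    rw [hcard] at hlast
    simp only [Lsize, Nat.add_sub_cancel]
    rw [blockSize_eq_sub_emptyDist hv, hcard, Nat.cast_sub hlast.le]
    ring
  rw [hL]
  exact_mod_cast Finset.sum_range_sq_tsub_le (emptyDist_strictMono hv).monotone _

lemma sub_mul_sum_Rsize_sq_le {k : ℕ} (hk1 : 1 ≤ k) (hk : k < n) (l : ℕ) :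
    ((n : ℝ) - k) * ∑ u : Fin (n - 1) → Fin n,
        (Rsize (extend n (n - 1) u) k : ℝ) ^ 2 *
          (if Lsize (extend n (n - 1) u) k = l then 1 else 0) ≤
      ((n : ℝ) - l) ^ 2 *
        ∑ u : Fin (n - 1) → Fin n, (if Lsize (extend n (n - 1) u) k = l then 1 else 0) := by
  obtain ⟨K, rfl⟩ : ∃ K, k = K + 1 := ⟨k - 1, by omega⟩
  set ind : (Fin (n - 1) → Fin n) → ℝ :=
    fun u => if Lsize (extend n (n - 1) u) (K + 1) = l then 1 else 0
  set g : (Fin (n - 1) → Fin n) → ℕ → ℕ := fun u j =>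
    emptyDist (occ (extend n (n - 1) u) K) (spot (extend n (n - 1) u) K) (j + 1) -
      emptyDist (occ (extend n (n - 1) u) K) (spot (extend n (n - 1) u) K) j
  set f : (Fin (n - 1) → Fin n) → ℝ :=
    fun u => (Rsize (extend n (n - 1) u) (K + 1) : ℝ) ^ 2 * ind u
  have hnk : ((n : ℝ) - (K + 1 : ℕ)) = ((n - K - 1 : ℕ) : ℝ) := by
    rw [Nat.cast_sub (by omega), Nat.cast_sub (by omega)]
    push_cast
    ring
  calc ((n : ℝ) - (K + 1 : ℕ)) * ∑ u, f u
      = ∑ j ∈ Finset.range (n - K - 1), ∑ u, f (swapTries K j u) := by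
        rw [Finset.sum_congr rfl fun j hj => (swapTries_bijective (by omega)
          (by simp only [Finset.mem_range] at hj; omega)).sum_comp f, Finset.sum_const,
          Finset.card_range, nsmul_eq_mul, hnk]
    _ = ∑ u, (∑ j ∈ Finset.range (n - K - 1), ((g u j : ℕ) : ℝ) ^ 2) * ind u := by
        rw [Finset.sum_comm]
        refine Finset.sum_congr rfl fun u _ => ?_
        rw [Finset.sum_mul]
        refine Finset.sum_congr rfl fun j hj => ?_
        simp only [Finset.mem_range] at hj
        simp only [f, ind, Rsize_swapTries (by omega) (show j + 1 < n - K by omega),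
          Lsize_swapTries (by omega) (show j < n - K by omega), g]
    _ ≤ ∑ u, ((n : ℝ) - l) ^ 2 * ind u := by
        refine Finset.sum_le_sum fun u _ => ?_
        by_cases hL : Lsize (extend n (n - 1) u) (K + 1) = l
        · simpa [ind, hL] using sum_sq_emptyDist_sub_le (extend n (n - 1) u) (by omega : K + 1 < n)
        · simp [ind, hL]
    _ = ((n : ℝ) - l) ^ 2 * ∑ u, ind u := by rw [Finset.mul_sum]

end Counting

/-- `E[R_{k,n}² | L_{k,n}] ≤ (n - L_{k,n})²/(n - k)`, i.e. for every `l`,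
`E[R_{k,n}² · 1_{L_{k,n} = l}] ≤ ((n - l)²/(n - k)) · P(L_{k,n} = l)`. -/
theorem cond_second_moment_R_given_L (n k : ℕ) (hk1 : 1 ≤ k) (hk2 : k ≤ n - 1) (l : ℕ) :
    expect n (n - 1) (fun t => (Rsize t k : ℝ) ^ 2 * (if Lsize t k = l then 1 else 0))
      ≤ (((n : ℝ) - l) ^ 2 / ((n : ℝ) - k)) * prob n (n - 1) (fun t => Lsize t k = l) := by
  have : NeZero n := ⟨by omega⟩
  have hk : (0 : ℝ) < n - k := sub_pos.2 (by exact_mod_cast (by omega : k < n))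
  have hN : (0 : ℝ) < (n : ℝ) ^ (n - 1) := pow_pos (Nat.cast_pos.2 (Nat.pos_of_neZero n)) _
  rw [prob, expect, expect, ← mul_div_assoc, div_le_div_iff_of_pos_right hN,
    div_mul_eq_mul_div, le_div_iff₀ hk, mul_comm]
  refine (sub_mul_sum_Rsize_sq_le (n := n) hk1 (by omega) l).trans_eq ?_
  -- the two sums differ only in their `Decidable` instances
  congr! 3

end Parking
end
end

section
/- Consider the circular parking model with n places and n−1 cars, extended by n−1 independent fair coin flips ε_1,…,ε_{n−1} ∈ {0,1} independent of the parking (so the sample space is {0,…,n−1}^{n−1} × {0,1}^{n−1} with uniform probability). Let A_{k,n} = ε_k L_{k,n} + (1−ε_k) R_{k,n} (the Quick-Find cost of the k-th union), C^{QF}_n = Σ_{k=1}^{n−1} A_{k,n}, and F_n = Σ_{k=1}^{n−1} (L_{k,n}+R_{k,n})/2. Then ‖F_n − C^{QF}_n‖₂ = o(n^{3/2}), i.e. lim_{n→∞} E[(F_n − C^{QF}_n)²]/n³ = 0. -/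
open scoped BigOperators
open Classical Filter Topology

noncomputable section

namespace Parking

/-!
Averaging over the coins, `E[(F_n - C^{QF}_n)²] = ∑ₖ E[((L_k - R_k) / 2)²]`, since the signs
`±1` of independent fair coins are orthonormal. If after `k` cars no arc of `T` consecutive
places is occupied, then `L_{k+1}, R_{k+1} ≤ T`. An occupied arc extends backwards to one
preceded by a free place; every car parked in such an arc tried first inside it, so an arc
of length `w ≥ T` received at least `w` of the first `k` tries, which by a Chernoff bound has
probability at most `(x e^{1-x})^w`, `x = k / n`. While at least `n / s` places are empty this is
`≤ n⁻⁴` for `T = 16 s² (log₂ n + 1)`; the last `n / s` cars contribute at most `n²` each. With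
`s ≈ n^{1/8}` the total is `O(n^{5/2} + n³ / s) = o(n³)`.
-/

open Finset Real

variable {n : ℕ}

section Symmetrization

variable {ι : Type*} [Fintype ι] [DecidableEq ι]

theorem sum_sign_mul_sign (i i' : ι) :
    ∑ ε : ι → Bool, (if ε i then (-1 : ℝ) else 1) * (if ε i' then -1 else 1)
      = if i = i' then 2 ^ Fintype.card ι else 0 := by
  split_ifs with h
  · subst h
    simp [apply_ite (fun x : ℝ => x * x)]
  · -- flipping the coin `i` changes the sign of every term
    let flip (ε : ι → Bool) : ι → Bool := Function.update ε i (!ε i)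
    have hflip : Function.Involutive flip := fun ε => by simp [flip]
    have hsum := Fintype.sum_bijective flip hflip.bijective
      (fun ε => (if ε i then (-1 : ℝ) else 1) * (if ε i' then -1 else 1))
      (fun ε => -((if ε i then (-1 : ℝ) else 1) * (if ε i' then -1 else 1))) fun ε => by
        simp only [flip, Function.update_self, Function.update_of_ne (Ne.symm h)]
        cases ε i <;> cases ε i' <;> norm_num
    rw [Finset.sum_neg_distrib] at hsum
    linarith

theorem sum_sq_sum_symmetrize (x y : ι → ℝ) :
    ∑ ε : ι → Bool, (∑ i, ((x i + y i) / 2 - if ε i then x i else y i)) ^ 2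
      = 2 ^ Fintype.card ι * ∑ i, ((x i - y i) / 2) ^ 2 := by
  have hsign : ∀ ε : ι → Bool, ∀ i, (x i + y i) / 2 - (if ε i then x i else y i)
      = (if ε i then -1 else 1) * ((x i - y i) / 2) := by
    intro ε i
    split_ifs <;> ring
  simp_rw [hsign]
  set d := fun i => (x i - y i) / 2
  calc ∑ ε : ι → Bool, (∑ i, (if ε i then (-1 : ℝ) else 1) * d i) ^ 2
      = ∑ ε : ι → Bool, ∑ i, ∑ i',
          ((if ε i then (-1 : ℝ) else 1) * (if ε i' then -1 else 1)) * (d i * d i') := by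
        simp_rw [sq, sum_mul_sum]
        exact sum_congr rfl fun ε _ => sum_congr rfl fun i _ => sum_congr rfl fun i' _ => by ring
    _ = ∑ i, ∑ i', (∑ ε : ι → Bool,
          (if ε i then (-1 : ℝ) else 1) * (if ε i' then -1 else 1)) * (d i * d i') := by
        rw [sum_comm]
        refine sum_congr rfl fun i _ => ?_
        rw [sum_comm]
        simp_rw [sum_mul]
    _ = 2 ^ Fintype.card ι * ∑ i, d i ^ 2 := by
        simp_rw [sum_sign_mul_sign, ite_mul, zero_mul, sum_ite_eq, mem_univ, if_true, mul_sum, sq]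

end Symmetrization

section Chernoff

open Fintype

variable {ι α : Type*} [Fintype ι] [DecidableEq ι] [Fintype α] [DecidableEq α]

theorem sum_pow_card_filter_mem (S : Finset ι) (W : Finset α) (c : ℝ) :
    ∑ f : ι → α, c ^ #{i ∈ S | f i ∈ W}
      = ((card α : ℝ) - #W + #W * c) ^ #S * (card α : ℝ) ^ (card ι - #S) := by
  have hprod : ∀ f : ι → α, c ^ #{i ∈ S | f i ∈ W}
      = ∏ i, if i ∈ S then (if f i ∈ W then c else 1) else 1 := by
    intro f
    rw [Fintype.prod_ite_mem, ← prod_filter, prod_const]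
  have hcol : ∀ i, ∑ a : α, (if i ∈ S then (if a ∈ W then c else 1) else 1)
      = if i ∈ S then (card α : ℝ) - #W + #W * c else (card α : ℝ) := by
    intro i
    split_ifs
    · simp [sum_ite, filter_not, ← compl_eq_univ_sdiff, card_compl, Nat.cast_sub (card_le_univ W)]
      ring
    · simp
  simp_rw [hprod]
  rw [← Fintype.prod_sum (fun i a => if i ∈ S then (if a ∈ W then c else 1) else 1),
    Finset.prod_congr rfl fun i _ => hcol i, prod_ite, prod_const, prod_const]
  simp [filter_not, ← compl_eq_univ_sdiff, card_compl]

theorem card_filter_le_mul_pow_le_sum_pow {β : Type*} [Fintype β] (g : β → ℕ) (m : ℕ) {c : ℝ}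
    (hc : 1 ≤ c) : (#{b : β | m ≤ g b} : ℝ) * c ^ m ≤ ∑ b, c ^ g b := by
  rw [← nsmul_eq_mul]
  refine (card_nsmul_le_sum _ _ _ fun b hb => pow_le_pow_right₀ hc (mem_filter.mp hb).2).trans ?_
  exact sum_le_sum_of_subset_of_nonneg (filter_subset _ _) fun _ _ _ => by positivity

theorem sub_add_mul_div_pow_le {N w : ℝ} {j : ℕ} (hj : 0 < j) (hjN : (j : ℝ) ≤ N) (hw : 0 ≤ w) :
    (N - w + w * (N / j)) ^ j ≤ N ^ j * exp (w * (1 - j / N)) := by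
  have hj' : (0 : ℝ) < j := by exact_mod_cast hj
  have hN : 0 < N := hj'.trans_le hjN
  have hy : 0 ≤ w * (1 - j / N) / j :=
    div_nonneg (mul_nonneg hw (by linarith [(div_le_one₀ hN).mpr hjN])) hj'.le
  calc (N - w + w * (N / j)) ^ j = (N * (1 + w * (1 - j / N) / j)) ^ j := by
        congr 1
        field_simp
        ring
    _ ≤ (N * exp (w * (1 - j / N) / j)) ^ j := by
        gcongr
        linarith [add_one_le_exp (w * (1 - j / N) / j)]
    _ = N ^ j * exp (w * (1 - j / N)) := by
        rw [mul_pow, ← exp_nat_mul]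
        field_simp

/-- Chernoff bound, from the exponential Markov inequality with parameter `card α / #S`. -/
theorem card_filter_card_le_card_filter_mem_le (S : Finset ι) (W : Finset α) (hS : S.Nonempty)
    (hSα : #S ≤ card α) :
    (#{f : ι → α | #W ≤ #{i ∈ S | f i ∈ W}} : ℝ)
      ≤ ((#S / card α : ℝ) * exp (1 - #S / card α)) ^ #W * (card α : ℝ) ^ card ι := by
  set x : ℝ := #S / card α
  have hj : (0 : ℝ) < #S := by exact_mod_cast hS.card_pos
  have hjN : (#S : ℝ) ≤ card α := by exact_mod_cast hSα
  have hx : 0 < x := div_pos hj (hj.trans_le hjN)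
  have hmarkov := card_filter_le_mul_pow_le_sum_pow (fun f : ι → α => #{i ∈ S | f i ∈ W}) #W
    (one_le_inv₀ hx |>.mpr (div_le_one_of_le₀ hjN (Nat.cast_nonneg _)))
  rw [sum_pow_card_filter_mem, ← le_div_iff₀ (by positivity), inv_div] at hmarkov
  calc _ ≤ _ := hmarkov
    _ ≤ (card α : ℝ) ^ #S * exp (#W * (1 - x)) * (card α : ℝ) ^ (card ι - #S)
          / (card α / #S : ℝ) ^ #W := by
        gcongr
        exact sub_add_mul_div_pow_le hS.card_pos hjN (Nat.cast_nonneg _)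
    _ = (x * exp (1 - x)) ^ #W * (card α : ℝ) ^ card ι := by
        rw [mul_right_comm, pow_mul_pow_sub _ (card_le_univ S), mul_pow, ← exp_nat_mul]
        simp only [x, div_pow]
        field_simp

theorem mul_exp_one_sub_le {x : ℝ} (hx0 : 0 ≤ x) (hx1 : x ≤ 1) :
    x * exp (1 - x) ≤ exp (-(1 - x) ^ 2 / 4) := by
  have hexp := exp_bound' (x := 1 - x) (by linarith) (by linarith) (n := 2) (by norm_num)
  norm_num [Finset.sum_range_succ] at hexp
  nlinarith [add_one_le_exp (-(1 - x) ^ 2 / 4), mul_le_mul_of_nonneg_left hexp hx0]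

theorem mul_exp_one_sub_le_one {x : ℝ} (hx0 : 0 ≤ x) (hx1 : x ≤ 1) : x * exp (1 - x) ≤ 1 :=
  (mul_exp_one_sub_le hx0 hx1).trans (exp_le_one_iff.mpr (by nlinarith))

end Chernoff

def arc (a : ZMod n) (w : ℕ) : Finset (ZMod n) :=
  (range w).image fun r : ℕ => a + r

theorem mem_arc {a y : ZMod n} {w : ℕ} : y ∈ arc a w ↔ ∃ r < w, a + r = y := by
  simp [arc]

theorem mem_arc_iff_val_lt [NeZero n] {a y : ZMod n} {w : ℕ} (hw : w ≤ n) :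
    y ∈ arc a w ↔ (y - a).val < w := by
  rw [mem_arc]
  constructor
  · rintro ⟨r, hr, rfl⟩
    rwa [add_sub_cancel_left, ZMod.val_cast_of_lt (hr.trans_le hw)]
  · exact fun hy => ⟨_, hy, by rw [ZMod.natCast_zmod_val, add_sub_cancel]⟩

theorem card_arc (a : ZMod n) {w : ℕ} (hw : w ≤ n) : #(arc a w) = w := by
  rw [arc, card_image_of_injOn, card_range]
  intro r hr r' hr' h
  have hr := (mem_range.mp hr).trans_le hw
  have hr' := (mem_range.mp hr').trans_le hw
  simpa [ZMod.val_cast_of_lt hr, ZMod.val_cast_of_lt hr'] using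
    congrArg ZMod.val (add_left_cancel h)

theorem arc_add (a : ZMod n) (b w : ℕ) : arc a (b + w) = arc a b ∪ arc (a + b) w := by
  ext y
  simp only [mem_union, mem_arc]
  constructor
  · rintro ⟨r, hr, rfl⟩
    rcases lt_or_ge r b with h | h
    · exact .inl ⟨r, h, rfl⟩
    · exact .inr ⟨r - b, by omega, by push_cast [h]; ring⟩
  · rintro (⟨r, hr, rfl⟩ | ⟨r, hr, rfl⟩)
    · exact ⟨r, by omega, rfl⟩
    · exact ⟨b + r, by omega, by push_cast; ring⟩

theorem sub_one_mem_arc [NeZero n] (a : ZMod n) {w : ℕ} (hw : n ≤ w) : a - 1 ∈ arc a w :=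
  mem_arc.mpr ⟨n - 1, by have := Nat.pos_of_neZero n; omega, by
    rw [Nat.cast_sub NeZero.one_le, ZMod.natCast_self]; ring⟩

theorem not_arc_subset_of_card_lt [NeZero n] {S : Finset (ZMod n)} (hS : #S < n) (a : ZMod n) :
    ¬ arc a n ⊆ S :=
  fun h => (card_le_card h).not_gt (by rwa [card_arc a le_rfl])

theorem exists_lt_add_eq_sub_one [NeZero n] {a x : ZMod n} {w i : ℕ} (hw : w ≤ n)
    (hx : x ∉ arc a w) (hxi : x + i ∈ arc a w) : ∃ i' < i, x + i' = a - 1 := by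
  rw [mem_arc_iff_val_lt hw] at hx hxi
  set u := (x - a).val
  have hu : ((u : ℕ) : ZMod n) = x - a := ZMod.natCast_zmod_val _
  have hun : u < n := ZMod.val_lt _
  have hwrap : n ≤ u + i := by
    by_contra h
    have : x + i - a = ((u + i : ℕ) : ZMod n) := by push_cast; rw [hu]; ring
    rw [this, ZMod.val_cast_of_lt (by omega)] at hxi
    omega
  refine ⟨n - (u + 1), by omega, ?_⟩
  rw [Nat.cast_sub (by omega), ZMod.natCast_self]
  push_cast
  rw [hu]
  ring

theorem exists_notMem_of_card_lt_s12 [NeZero n] {S : Finset (ZMod n)} (hS : #S < n) :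
    ∃ x, x ∉ S := by
  obtain ⟨x, -, hx⟩ := exists_mem_notMem_of_card_lt_card (s := S) (t := univ)
    (by rwa [card_univ, ZMod.card])
  exact ⟨x, hx⟩

theorem arc_sub_subset_of_lt_blockSize {S : Finset (ZMod n)} {e : ZMod n} {m : ℕ}
    (h : m < blockSize S e) : arc (e - (m : ZMod n)) m ⊆ S := by
  intro y hy
  obtain ⟨r, hr, rfl⟩ := mem_arc.mp hy
  rw [blockSize] at h
  split_ifs at h with hex
  · have hmem := Nat.find_min hex (show m - r - 1 < Nat.find hex by omega)
    rw [not_not, show m - r - 1 + 1 = m - r by omega, Nat.cast_sub hr.le] at hmem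
    convert hmem using 1
    ring
  · omega

theorem blockSize_le_of_forall_not_arc_subset {S : Finset (ZMod n)} {m : ℕ}
    (h : ∀ a, ¬ arc a m ⊆ S) (e : ZMod n) : blockSize S e ≤ m :=
  not_lt.mp fun hlt => h _ (arc_sub_subset_of_lt_blockSize hlt)

theorem exists_maximal_arc [NeZero n] {S : Finset (ZMod n)} (hS : #S < n) {v : ZMod n} {T : ℕ}
    (hv : arc v T ⊆ S) : ∃ a w, T ≤ w ∧ w < n ∧ arc a w ⊆ S ∧ a - 1 ∉ S := by
  obtain ⟨x, hx⟩ := exists_notMem_of_card_lt_s12 hS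
  have hex : ∃ i : ℕ, v - ((i + 1 : ℕ) : ZMod n) ∉ S :=
    ⟨(v - x - 1).val, by rwa [Nat.cast_succ, ZMod.natCast_zmod_val, sub_add_cancel, sub_sub_cancel]⟩
  set b : ℕ := Nat.find hex
  have hback : arc (v - (b : ZMod n)) b ⊆ S :=
    arc_sub_subset_of_lt_blockSize (by rw [blockSize, dif_pos hex]; omega)
  have hsub : arc (v - (b : ZMod n)) (b + T) ⊆ S := by
    rw [arc_add, sub_add_cancel]
    exact union_subset hback hv
  have hfree : v - (b : ZMod n) - 1 ∉ S := by
    have h : v - ((b + 1 : ℕ) : ZMod n) ∉ S := Nat.find_spec hex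
    rwa [Nat.cast_succ, ← sub_sub] at h
  refine ⟨v - (b : ZMod n), b + T, by omega, ?_, hsub, hfree⟩
  by_contra hw
  exact hfree (hsub (sub_one_mem_arc _ (by omega)))

theorem occ_eq_image_spot (t : ℕ → ZMod n) (j : ℕ) : occ t j = (range j).image (spot t) := by
  induction j with
  | zero => rfl
  | succ j ih => rw [range_add_one, image_insert, ← ih]; rfl

theorem card_occ_le (t : ℕ → ZMod n) (j : ℕ) : #(occ t j) ≤ j := by
  simpa [occ_eq_image_spot] using card_image_le (s := range j) (f := spot t)

theorem occ_mono_s12 (t : ℕ → ZMod n) {i j : ℕ} (h : i ≤ j) : occ t i ⊆ occ t j := by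
  simpa only [occ_eq_image_spot] using image_subset_image (range_subset_range.mpr h)

theorem exists_spot_eq_add (t : ℕ → ZMod n) (j : ℕ) :
    ∃ i : ℕ, spot t j = t j + i ∧ ∀ i' < i, t j + i' ∈ occ t j := by
  unfold spot firstFree
  split_ifs with h
  · exact ⟨Nat.find h, rfl, fun i' hi' => not_not.mp (Nat.find_min h hi')⟩
  · exact ⟨0, by simp, by simp⟩

theorem try_mem_arc_of_spot_mem [NeZero n] {t : ℕ → ZMod n} {j k w : ℕ} {a : ZMod n}
    (hw : w ≤ n) (hfree : a - 1 ∉ occ t j) (hk : k < j) (hspot : spot t k ∈ arc a w) :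
    t k ∈ arc a w := by
  by_contra hout
  obtain ⟨i, hi, hpath⟩ := exists_spot_eq_add t k
  obtain ⟨i', hi', heq⟩ := exists_lt_add_eq_sub_one hw hout (hi ▸ hspot)
  exact hfree (occ_mono_s12 t hk.le (heq ▸ hpath i' hi'))

theorem exists_arc_le_card_tries [NeZero n] {t : ℕ → ZMod n} {j T : ℕ} (hj : j < n)
    {v : ZMod n} (hv : arc v T ⊆ occ t j) :
    ∃ a w, T ≤ w ∧ w ≤ j ∧ w ≤ #{k ∈ range j | t k ∈ arc a w} := by
  obtain ⟨a, w, hTw, hwn, hsub, hfree⟩ := exists_maximal_arc ((card_occ_le t j).trans_lt hj) hv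
  have hcard : #(arc a w) = w := card_arc a hwn.le
  refine ⟨a, w, hTw, hcard ▸ (card_le_card hsub).trans (card_occ_le t j), ?_⟩
  calc w = #(arc a w) := hcard.symm
    _ ≤ #{k ∈ range j | spot t k ∈ arc a w} := by
        refine card_le_card_of_surjOn (spot t) fun y hy => ?_
        obtain ⟨k, hk, rfl⟩ := mem_image.mp (occ_eq_image_spot t j ▸ hsub hy)
        exact ⟨k, mem_filter.mpr ⟨hk, hy⟩, rfl⟩
    _ ≤ #{k ∈ range j | t k ∈ arc a w} := by
        refine card_le_card fun k hk => ?_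
        obtain ⟨hkj, hspot⟩ := mem_filter.mp hk
        exact mem_filter.mpr ⟨hkj, try_mem_arc_of_spot_mem hwn.le hfree (mem_range.mp hkj) hspot⟩

theorem card_filter_natCast_mem [NeZero n] (W : Finset (ZMod n)) :
    #{v : Fin n | ((v : ℕ) : ZMod n) ∈ W} = #W := by
  refine card_nbij' (fun v => ((v : ℕ) : ZMod n)) (fun x => ⟨x.val, ZMod.val_lt x⟩) ?_ ?_ ?_ ?_
  · intro v hv
    simpa using hv
  · intro x hx
    simpa using hx
  · intro v _
    ext
    simp [ZMod.val_cast_of_lt v.isLt]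
  · intro x _
    simp

theorem card_filter_range_extend_mem {K j : ℕ} (hjK : j ≤ K) (tt : Fin K → Fin n)
    (W : Finset (ZMod n)) :
    #{k ∈ range j | extend n K tt k ∈ W}
      = #{k ∈ ({k : Fin K | (k : ℕ) < j} : Finset (Fin K)) |
          tt k ∈ ({v : Fin n | ((v : ℕ) : ZMod n) ∈ W} : Finset (Fin n))} := by
  rw [← card_map Fin.valEmbedding]
  congr 1
  ext k
  simp only [mem_filter, mem_range, Finset.mem_map, mem_univ, true_and, Fin.valEmbedding_apply]
  constructor
  · rintro ⟨hk, hW⟩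
    refine ⟨⟨k, by omega⟩, ⟨hk, ?_⟩, rfl⟩
    simpa [extend, show k < K by omega] using hW
  · rintro ⟨k, ⟨hk, hW⟩, rfl⟩
    simpa [extend] using ⟨hk, hW⟩

theorem card_filter_le_card_tries_mem_arc_le [NeZero n] {K j w : ℕ} (hjK : j ≤ K) (hjn : j ≤ n)
    (hw : 1 ≤ w) (hwj : w ≤ j) (a : ZMod n) :
    (#{tt : Fin K → Fin n | w ≤ #{k ∈ range j | extend n K tt k ∈ arc a w}} : ℝ)
      ≤ ((j / n : ℝ) * exp (1 - j / n)) ^ w * n ^ K := by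
  set S : Finset (Fin K) := {k : Fin K | (k : ℕ) < j}
  set W : Finset (Fin n) := {v : Fin n | ((v : ℕ) : ZMod n) ∈ arc a w}
  have hS : #S = j := by simp [S, Fin.card_filter_val_lt, hjK]
  have hW : #W = w := by simp [W, card_filter_natCast_mem, card_arc a (hwj.trans hjn)]
  have hevent : ({tt : Fin K → Fin n | w ≤ #{k ∈ range j | extend n K tt k ∈ arc a w}} : Finset _)
      = ({tt : Fin K → Fin n | #W ≤ #{k ∈ S | tt k ∈ W}} : Finset _) := by
    simp only [hW, card_filter_range_extend_mem hjK, S, W]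
  rw [hevent]
  convert card_filter_card_le_card_filter_mem_le S W (card_pos.mp (by omega)) (by simp; omega)
    using 3 <;> simp [hS, hW]

theorem card_filter_exists_arc_subset_occ_le [NeZero n] {K j T : ℕ} (hjK : j ≤ K) (hjn : j < n)
    (hT : 1 ≤ T) :
    (#{tt : Fin K → Fin n | ∃ a, arc a T ⊆ occ (extend n K tt) j} : ℝ)
      ≤ n ^ 2 * ((j / n : ℝ) * exp (1 - j / n)) ^ T * n ^ K := by
  set ρ := (j / n : ℝ) * exp (1 - j / n)
  have hρ1 : ρ ≤ 1 := mul_exp_one_sub_le_one (by positivity)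
    (div_le_one_of_le₀ (by exact_mod_cast hjn.le) (by positivity))
  have hcover : ({tt : Fin K → Fin n | ∃ a, arc a T ⊆ occ (extend n K tt) j} : Finset _)
      ⊆ (univ ×ˢ Icc T j).biUnion fun p : ZMod n × ℕ =>
          {tt : Fin K → Fin n | p.2 ≤ #{k ∈ range j | extend n K tt k ∈ arc p.1 p.2}} := by
    intro tt htt
    obtain ⟨v, hv⟩ := (mem_filter.mp htt).2
    obtain ⟨a, w, hTw, hwj, hw⟩ := exists_arc_le_card_tries hjn hv
    exact mem_biUnion.mpr ⟨(a, w), by simp [hTw, hwj], by simpa using hw⟩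
  calc (#{tt : Fin K → Fin n | ∃ a, arc a T ⊆ occ (extend n K tt) j} : ℝ)
      ≤ ∑ p ∈ (univ : Finset (ZMod n)) ×ˢ Icc T j,
          (#{tt : Fin K → Fin n | p.2 ≤ #{k ∈ range j | extend n K tt k ∈ arc p.1 p.2}} : ℝ) := by
        exact_mod_cast (card_le_card hcover).trans card_biUnion_le
    _ ≤ ∑ p ∈ (univ : Finset (ZMod n)) ×ˢ Icc T j, ρ ^ T * n ^ K := by
        refine sum_le_sum fun p hp => ?_
        obtain ⟨hTw, hwj⟩ := mem_Icc.mp (mem_product.mp hp).2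
        refine (card_filter_le_card_tries_mem_arc_le hjK hjn.le (by omega) hwj p.1).trans ?_
        exact mul_le_mul_of_nonneg_right (pow_le_pow_of_le_one (by positivity) hρ1 hTw)
          (by positivity)
    _ ≤ n ^ 2 * ρ ^ T * n ^ K := by
        rw [sum_const, card_product, card_univ, ZMod.card, Nat.card_Icc, nsmul_eq_mul, mul_assoc]
        gcongr
        norm_cast
        rw [sq]
        gcongr
        omega

def halfSizeDiff (t : ℕ → ZMod n) (j : ℕ) : ℝ := ((Lsize t (j + 1) : ℝ) - Rsize t (j + 1)) / 2

theorem halfSizeDiff_sq_le_of_forall_not_arc_subset {t : ℕ → ZMod n} {j m : ℕ}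
    (h : ∀ a, ¬ arc a m ⊆ occ t j) : halfSizeDiff t j ^ 2 ≤ (m : ℝ) ^ 2 := by
  have hL : (Lsize t (j + 1) : ℝ) ≤ m := by
    exact_mod_cast blockSize_le_of_forall_not_arc_subset h _
  have hR : (Rsize t (j + 1) : ℝ) ≤ m := by
    exact_mod_cast blockSize_le_of_forall_not_arc_subset h _
  unfold halfSizeDiff
  nlinarith [(Lsize t (j + 1)).cast_nonneg (α := ℝ), (Rsize t (j + 1)).cast_nonneg (α := ℝ)]

theorem halfSizeDiff_sq_le_sq [NeZero n] (t : ℕ → ZMod n) {j : ℕ} (hj : j < n) :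
    halfSizeDiff t j ^ 2 ≤ (n : ℝ) ^ 2 :=
  halfSizeDiff_sq_le_of_forall_not_arc_subset
    (not_arc_subset_of_card_lt ((card_occ_le t j).trans_lt hj))

theorem halfSizeDiff_sq_le [NeZero n] (t : ℕ → ZMod n) {j : ℕ} (hj : j < n) (T : ℕ) :
    halfSizeDiff t j ^ 2 ≤ (T : ℝ) ^ 2 + n ^ 2 * (if ∃ a, arc a T ⊆ occ t j then 1 else 0) := by
  split_ifs with h
  · nlinarith [halfSizeDiff_sq_le_sq t hj]
  · nlinarith [halfSizeDiff_sq_le_of_forall_not_arc_subset (not_exists.mp h)]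

theorem sum_halfSizeDiff_sq_le [NeZero n] {K j T : ℕ} (hjK : j ≤ K) (hjn : j < n)
    (hT : 1 ≤ T) :
    ∑ tt : Fin K → Fin n, halfSizeDiff (extend n K tt) j ^ 2
      ≤ ((T : ℝ) ^ 2 + n ^ 4 * ((j / n : ℝ) * exp (1 - j / n)) ^ T) * n ^ K := by
  calc ∑ tt : Fin K → Fin n, halfSizeDiff (extend n K tt) j ^ 2
      ≤ ∑ tt : Fin K → Fin n, ((T : ℝ) ^ 2
          + n ^ 2 * (if ∃ a, arc a T ⊆ occ (extend n K tt) j then 1 else 0)) :=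
        sum_le_sum fun tt _ => halfSizeDiff_sq_le _ hjn T
    _ = (T : ℝ) ^ 2 * n ^ K
          + n ^ 2 * #{tt : Fin K → Fin n | ∃ a, arc a T ⊆ occ (extend n K tt) j} := by
        rw [sum_add_distrib, ← mul_sum, sum_boole]
        simp [mul_comm]
    _ ≤ (T : ℝ) ^ 2 * n ^ K + n ^ 2 * (n ^ 2 * ((j / n : ℝ) * exp (1 - j / n)) ^ T * n ^ K) := by
        gcongr
        exact card_filter_exists_arc_subset_occ_le hjK hjn hT
    _ = _ := by ring

/-- While a fraction `1 / s` of the places is still empty, occupied arcs of this length have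
probability at most `n⁻²`. -/
def runLength (s n : ℕ) : ℕ := 16 * s ^ 2 * (Nat.log 2 n + 1)

theorem pow_four_mul_pow_runLength_le_one {s : ℕ} {x : ℝ} (hx : 0 ≤ x) (hs : 1 ≤ s)
    (hxs : 1 / s ≤ 1 - x) : (n : ℝ) ^ 4 * (x * exp (1 - x)) ^ runLength s n ≤ 1 := by
  set L := Nat.log 2 n + 1
  have hs0 : (0 : ℝ) < s := by exact_mod_cast hs
  have hρ : x * exp (1 - x) ≤ exp (-1 / (4 * s ^ 2)) := by
    refine (mul_exp_one_sub_le hx (by linarith [one_div_pos.mpr hs0])).trans (exp_le_exp.mpr ?_)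
    have h1 : (1 / s : ℝ) ^ 2 ≤ (1 - x) ^ 2 := pow_le_pow_left₀ (by positivity) hxs 2
    have h2 : (1 / s : ℝ) ^ 2 / 4 = 1 / (4 * s ^ 2) := by field_simp
    rw [neg_div, neg_div]
    linarith
  have hn : (n : ℝ) ≤ exp L := by
    calc (n : ℝ) ≤ 2 ^ L := by exact_mod_cast (Nat.lt_pow_succ_log_self one_lt_two n).le
      _ ≤ exp 1 ^ L := by gcongr; linarith [add_one_le_exp 1]
      _ = exp L := by rw [← exp_nat_mul, mul_one]
  calc (n : ℝ) ^ 4 * (x * exp (1 - x)) ^ runLength s n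
      ≤ exp L ^ 4 * exp (-1 / (4 * s ^ 2)) ^ runLength s n := by gcongr
    _ = 1 := by
        rw [← exp_nat_mul, ← exp_nat_mul, ← exp_add, exp_eq_one_iff]
        simp only [runLength, L]
        push_cast
        field_simp
        ring

theorem card_filter_mul_sub_lt_le_div {K s : ℕ} (hK : K ≤ n) (hs : 1 ≤ s) :
    #{k : Fin K | s * (n - k) < n} ≤ n / s := by
  calc #{k : Fin K | s * (n - k) < n} ≤ #(Icc 1 (n / s)) := by
        refine card_le_card_of_injOn (fun k => n - k) (fun k hk => ?_) fun k _ k' _ h => ?_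
        · have hlt : s * (n - k) < n := (mem_filter.mp hk).2
          have hk := k.isLt
          simp only [coe_Icc, Set.mem_Icc]
          exact ⟨by omega, (Nat.le_div_iff_mul_le hs).mpr (by rw [mul_comm]; exact hlt.le)⟩
        · have := k.isLt
          have := k'.isLt
          exact Fin.ext (by simp only at h; omega)
    _ = n / s := by simp

theorem sum_halfSizeDiff_sq_le_of_le_mul_sub [NeZero n] {K j s : ℕ} (hjK : j ≤ K) (hjn : j < n)
    (hs : 1 ≤ s) (hgood : n ≤ s * (n - j)) :
    ∑ tt : Fin K → Fin n, halfSizeDiff (extend n K tt) j ^ 2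
      ≤ ((runLength s n : ℝ) ^ 2 + 1) * n ^ K := by
  have hT : 1 ≤ runLength s n := by
    simp only [runLength]
    have := Nat.one_le_pow 2 s hs
    nlinarith
  have hn0 : (0 : ℝ) < n := by exact_mod_cast Nat.pos_of_neZero n
  have hfrac : 1 / (s : ℝ) ≤ 1 - j / n := by
    have : (n : ℝ) ≤ s * (n - j) := by
      have := (Nat.cast_le (α := ℝ)).mpr hgood
      rwa [Nat.cast_mul, Nat.cast_sub hjn.le] at this
    rw [one_sub_div hn0.ne', div_le_div_iff₀ (by exact_mod_cast hs) hn0]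
    linarith
  have hsmall := pow_four_mul_pow_runLength_le_one (n := n) (by positivity) hs hfrac
  refine (sum_halfSizeDiff_sq_le hjK hjn hT).trans ?_
  gcongr

theorem sum_halfSizeDiff_sq_le_sq [NeZero n] {K j : ℕ} (hjn : j < n) :
    ∑ tt : Fin K → Fin n, halfSizeDiff (extend n K tt) j ^ 2 ≤ (n : ℝ) ^ 2 * n ^ K :=
  calc ∑ tt : Fin K → Fin n, halfSizeDiff (extend n K tt) j ^ 2
      ≤ ∑ _tt : Fin K → Fin n, (n : ℝ) ^ 2 := sum_le_sum fun tt _ => halfSizeDiff_sq_le_sq _ hjn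
    _ = (n : ℝ) ^ 2 * n ^ K := by simp [mul_comm]

theorem sum_sum_halfSizeDiff_sq_le [NeZero n] {K s : ℕ} (hK : K < n) (hs : 1 ≤ s) :
    ∑ tt : Fin K → Fin n, ∑ k : Fin K, halfSizeDiff (extend n K tt) k ^ 2
      ≤ (K * ((runLength s n : ℝ) ^ 2 + 1) + (n / s : ℕ) * (n : ℝ) ^ 2) * n ^ K := by
  have hterm : ∀ k : Fin K, ∑ tt : Fin K → Fin n, halfSizeDiff (extend n K tt) k ^ 2
      ≤ (if n ≤ s * (n - k) then (runLength s n : ℝ) ^ 2 + 1 else (n : ℝ) ^ 2) * n ^ K := by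
    intro k
    split_ifs with hgood
    · exact sum_halfSizeDiff_sq_le_of_le_mul_sub k.isLt.le (k.isLt.trans hK) hs hgood
    · exact sum_halfSizeDiff_sq_le_sq (k.isLt.trans hK)
  rw [sum_comm]
  refine (sum_le_sum fun k _ => hterm k).trans ?_
  rw [← sum_mul, sum_ite, sum_const, sum_const, nsmul_eq_mul, nsmul_eq_mul]
  gcongr
  · exact_mod_cast (card_filter_le _ _).trans (card_fin K).le
  · simp only [not_le]
    exact_mod_cast card_filter_mul_sub_lt_le_div hK.le hs

theorem sum_sum_halfSizeDiff_sq_div_le [NeZero n] {s : ℕ} (hs : 1 ≤ s) :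
    (∑ tt : Fin (n - 1) → Fin n, ∑ k : Fin (n - 1), halfSizeDiff (extend n (n - 1) tt) k ^ 2)
        / n ^ (n - 1) / n ^ 3
      ≤ ((runLength s n : ℝ) ^ 2 + 1) / n ^ 2 + 1 / s := by
  have hn0 : (0 : ℝ) < n := by exact_mod_cast Nat.pos_of_neZero n
  have hK : ((n - 1 : ℕ) : ℝ) ≤ n := by exact_mod_cast Nat.sub_le n 1
  calc _ ≤ (((n - 1 : ℕ) : ℝ) * ((runLength s n : ℝ) ^ 2 + 1) + (n / s : ℕ) * (n : ℝ) ^ 2)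
          * n ^ (n - 1) / n ^ (n - 1) / n ^ 3 := by
        gcongr
        exact sum_sum_halfSizeDiff_sq_le (by have := Nat.pos_of_neZero n; omega) hs
    _ ≤ (n * ((runLength s n : ℝ) ^ 2 + 1) + n / s * (n : ℝ) ^ 2) / n ^ 3 := by
        rw [mul_div_cancel_right₀ _ (by positivity)]
        gcongr
        exact Nat.cast_div_le
    _ = ((runLength s n : ℝ) ^ 2 + 1) / n ^ 2 + 1 / s := by
        field_simp

def eighthRoot (n : ℕ) : ℕ := Nat.sqrt (Nat.sqrt (Nat.sqrt n))

theorem tendsto_nat_sqrt_atTop : Tendsto Nat.sqrt atTop atTop :=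
  tendsto_atTop_atTop.mpr fun b => ⟨b * b, fun _ hm => Nat.le_sqrt.mpr hm⟩

theorem tendsto_eighthRoot_atTop : Tendsto eighthRoot atTop atTop :=
  tendsto_nat_sqrt_atTop.comp (tendsto_nat_sqrt_atTop.comp tendsto_nat_sqrt_atTop)

theorem one_le_eighthRoot (hn : 1 ≤ n) : 1 ≤ eighthRoot n :=
  Nat.le_sqrt.mpr (Nat.le_sqrt.mpr (Nat.le_sqrt.mpr hn))

theorem eighthRoot_pow_four_le (n : ℕ) : eighthRoot n ^ 4 ≤ Nat.sqrt n :=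
  calc eighthRoot n ^ 4 = (eighthRoot n ^ 2) ^ 2 := by ring
    _ ≤ Nat.sqrt (Nat.sqrt n) ^ 2 := Nat.pow_le_pow_left (Nat.sqrt_le' _) 2
    _ ≤ Nat.sqrt n := Nat.sqrt_le' _

theorem succ_sq_le_two_pow {m : ℕ} (hm : 6 ≤ m) : (m + 1) ^ 2 ≤ 2 ^ m := by
  induction m, hm using Nat.le_induction with
  | base => norm_num
  | succ m hm ih =>
    calc (m + 1 + 1) ^ 2 ≤ 2 * (m + 1) ^ 2 := by nlinarith
      _ ≤ 2 ^ (m + 1) := by rw [pow_succ 2 m]; omega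

theorem log_two_add_one_sq_le (hn : 64 ≤ n) : (Nat.log 2 n + 1) ^ 2 ≤ n :=
  (succ_sq_le_two_pow (Nat.le_log_of_pow_le one_lt_two (by omega))).trans
    (Nat.pow_log_le_self 2 (by omega))

theorem runLength_eighthRoot_sq_add_one_le (hn : 64 ≤ n) :
    runLength (eighthRoot n) n ^ 2 + 1 ≤ 257 * Nat.sqrt n * n := by
  have h1 : 1 ≤ Nat.sqrt n * n := Nat.one_le_iff_ne_zero.mpr
    (Nat.mul_ne_zero (Nat.sqrt_pos.mpr (by omega)).ne' (by omega))
  have h2 : runLength (eighthRoot n) n ^ 2 ≤ 256 * Nat.sqrt n * n := by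
    calc runLength (eighthRoot n) n ^ 2 = 256 * eighthRoot n ^ 4 * (Nat.log 2 n + 1) ^ 2 := by
          simp only [runLength]; ring
      _ ≤ 256 * Nat.sqrt n * n := by
          gcongr
          · exact eighthRoot_pow_four_le n
          · exact log_two_add_one_sq_le hn
  calc runLength (eighthRoot n) n ^ 2 + 1 ≤ 256 * Nat.sqrt n * n + Nat.sqrt n * n := by omega
    _ = 257 * Nat.sqrt n * n := by ring

theorem tendsto_runLength_eighthRoot_sq_div :
    Tendsto (fun n : ℕ => ((runLength (eighthRoot n) n : ℝ) ^ 2 + 1) / n ^ 2) atTop (𝓝 0) := by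
  have hlim : Tendsto (fun n : ℕ => (257 : ℝ) / Nat.sqrt n) atTop (𝓝 0) :=
    (tendsto_natCast_atTop_atTop.comp tendsto_nat_sqrt_atTop).const_div_atTop 257
  refine squeeze_zero' (Eventually.of_forall fun n => by positivity) ?_ hlim
  filter_upwards [eventually_ge_atTop 64] with n hn
  have hsqrt : (0 : ℝ) < Nat.sqrt n := by exact_mod_cast Nat.sqrt_pos.mpr (by omega)
  have hsq : (Nat.sqrt n : ℝ) * Nat.sqrt n ≤ n := by exact_mod_cast Nat.sqrt_le n
  have hT : ((runLength (eighthRoot n) n : ℝ) ^ 2 + 1) ≤ 257 * Nat.sqrt n * n := by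
    exact_mod_cast runLength_eighthRoot_sq_add_one_le hn
  rw [div_le_div_iff₀ (by positivity) hsqrt]
  nlinarith

/-- with independent fair coin flips `ε₁,…,ε_{n-1}` independent of the
parking, `A_{k,n} = ε_k L_{k,n} + (1-ε_k) R_{k,n}`, `F_n = Σ (L_{k,n}+R_{k,n})/2`,
one has `‖F_n - C^{QF}_n‖₂ = o(n^{3/2})`, i.e. `E[(F_n - C^{QF}_n)²]/n³ → 0`.
The expectation is over the uniform measure on `{0,…,n-1}^{n-1} × {0,1}^{n-1}`. -/
theorem quickFind_symmetrization :
    Tendsto (fun n : ℕ =>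
        ((∑ p : (Fin (n - 1) → Fin n) × (Fin (n - 1) → Bool),
            (∑ k : Fin (n - 1),
              (((Lsize (extend n (n - 1) p.1) ((k : ℕ) + 1) : ℝ)
                  + (Rsize (extend n (n - 1) p.1) ((k : ℕ) + 1) : ℝ)) / 2
                - (if p.2 k then (Lsize (extend n (n - 1) p.1) ((k : ℕ) + 1) : ℝ)
                   else (Rsize (extend n (n - 1) p.1) ((k : ℕ) + 1) : ℝ)))) ^ 2)
          / ((n : ℝ) ^ (n - 1) * 2 ^ (n - 1))) / (n : ℝ) ^ 3)
      atTop (𝓝 0) := by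
  have hlim : Tendsto (fun n : ℕ =>
      ((runLength (eighthRoot n) n : ℝ) ^ 2 + 1) / n ^ 2 + 1 / eighthRoot n) atTop (𝓝 0) := by
    simpa using tendsto_runLength_eighthRoot_sq_div.add
      ((tendsto_natCast_atTop_atTop.comp tendsto_eighthRoot_atTop).const_div_atTop 1)
  refine squeeze_zero' (Eventually.of_forall fun n => by positivity) ?_ hlim
  filter_upwards [eventually_ge_atTop 1] with n hn
  have : NeZero n := ⟨by omega⟩
  rw [Fintype.sum_prod_type]
  simp_rw [sum_sq_sum_symmetrize]
  rw [← mul_sum, Fintype.card_fin, mul_comm ((n : ℝ) ^ (n - 1)),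
    mul_div_mul_left _ _ (by positivity)]
  exact sum_sum_halfSizeDiff_sq_div_le (one_le_eighthRoot hn)

end Parking
end
end
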